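/- Let G be a graph with Laplacian L, a, b twin vertices, M = (e_a - e_b)(e_a - e_b)^T, α ∈ ℝ. Then for all t ∈ ℝ, exp(-i t (L + α M))(e_a - e_b) = exp(-2 i α t) · exp(-i t L)(e_a - e_b). -/

import Mathlib

/-!
The vector `e_a - e_b` is a common eigenvector of the Laplacian `L`, with eigenvalue
`deg a + [a ~ b]` (this is where twinness enters), and of `M = (e_a - e_b)(e_a - e_b)ᵀ`, with
eigenvalue `2`. Hence both `exp (-i t (L + α M))` and `exp (-i t L)` act on it as scalars, and
these scalars differ by the factor `exp (-2 i α t)`.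
-/

namespace Matrix

open NormedSpace in
theorem exp_mulVec_of_mulVec_eq_smul {m 𝕂 : Type*} [Fintype m] [DecidableEq m] [RCLike 𝕂]
    {A : Matrix m m 𝕂} {v : m → 𝕂} {μ : 𝕂} (h : A *ᵥ v = μ • v) :
    exp A *ᵥ v = exp μ • v := by
  -- every column of `vecMulVec v 1` is `v`, so the eigenvector equation becomes an identity
  -- between square matrices, to which `SemiconjBy.exp_right` applies
  have hA : SemiconjBy (vecMulVec v 1) (algebraMap 𝕂 _ μ) A := by
    rw [SemiconjBy, mul_vecMulVec, h, Algebra.algebraMap_eq_smul_one, mul_smul_one, smul_vecMulVec]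
  have hexpA : SemiconjBy (vecMulVec v 1) (algebraMap 𝕂 _ (exp μ)) (exp A) := by
    open scoped Norms.Operator in
    rw [algebraMap_exp_comm]
    exact hA.exp_right
  rw [SemiconjBy, mul_vecMulVec, Algebra.algebraMap_eq_smul_one, mul_smul_one] at hexpA
  funext i
  simpa using (congrFun (congrFun hexpA i) i).symm

theorem vecMulVec_self_mulVec_self {m R : Type*} [Fintype m] [CommSemiring R] (v : m → R) :
    vecMulVec v v *ᵥ v = (v ⬝ᵥ v) • v := by
  rw [vecMulVec_mulVec, op_smul_eq_smul]

theorem dotProduct_single_sub_single_self {m R : Type*} [Fintype m] [DecidableEq m] [Ring R]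
    {a b : m} (hab : a ≠ b) :
    (Pi.single a 1 - Pi.single b 1 : m → R) ⬝ᵥ (Pi.single a 1 - Pi.single b 1) = 2 := by
  simp [dotProduct_sub, hab, hab.symm, one_add_one_eq_two]

end Matrix

namespace SimpleGraph

variable {V : Type*}

def AreTwins (G : SimpleGraph V) (a b : V) : Prop :=
  ∀ v, v ≠ a → v ≠ b → (G.Adj a v ↔ G.Adj b v)

namespace AreTwins

variable {G : SimpleGraph V} {a b : V} [DecidableEq V]

theorem adj_iff_adj_swap (h : G.AreTwins a b) (w : V) :
    G.Adj a w ↔ G.Adj b (Equiv.swap a b w) := by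
  rcases eq_or_ne w a with rfl | hwa
  · simp
  rcases eq_or_ne w b with rfl | hwb
  · simp [G.adj_comm]
  · rw [Equiv.swap_apply_of_ne_of_ne hwa hwb]
    exact h w hwa hwb

theorem degree_eq [Fintype (G.neighborSet a)] [Fintype (G.neighborSet b)] (h : G.AreTwins a b) :
    G.degree a = G.degree b := by
  rw [← card_neighborFinset_eq_degree, ← card_neighborFinset_eq_degree,
    ← Finset.card_map (Equiv.swap a b).toEmbedding]
  congr 1
  ext w
  simpa using h.adj_iff_adj_swap (Equiv.swap a b w)

open Matrix in
theorem lapMatrix_mulVec_single_sub_single {R : Type*} [NonAssocRing R] [Fintype V]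
    [DecidableRel G.Adj] (h : G.AreTwins a b) (hab : a ≠ b) :
    G.lapMatrix R *ᵥ (Pi.single a 1 - Pi.single b 1) =
      ((G.degree a + if G.Adj a b then 1 else 0 : ℕ) : R) • (Pi.single a 1 - Pi.single b 1) := by
  funext u
  rw [lapMatrix_mulVec_apply]
  simp only [Pi.sub_apply, Finset.sum_sub_distrib, Finset.sum_pi_single', mem_neighborFinset]
  rcases eq_or_ne u a with rfl | hua
  · simp [hab]
  rcases eq_or_ne u b with rfl | hub
  · simp [hab.symm, h.degree_eq, G.adj_comm, sub_eq_add_neg, add_comm]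
  · simp [hua, hub, G.adj_comm u, h u hua hub]

end AreTwins

end SimpleGraph

open Matrix Complex

theorem twin_pair_state_evolves_up_to_phase
    {n : ℕ} (G : SimpleGraph (Fin n)) [DecidableRel G.Adj]
    (a b : Fin n) (hab : a ≠ b)
    (htwin : ∀ v : Fin n, v ≠ a → v ≠ b → (G.Adj a v ↔ G.Adj b v)) (α : ℝ) :
    ∀ t : ℝ,
      (NormedSpace.exp ((-(Complex.I * (t : ℂ))) •
          (G.lapMatrix ℂ + (α : ℂ) •
            vecMulVec ((Pi.single a 1 : Fin n → ℂ) - Pi.single b 1)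
              ((Pi.single a 1 : Fin n → ℂ) - Pi.single b 1)))).mulVec
          ((Pi.single a 1 : Fin n → ℂ) - Pi.single b 1)
        = Complex.exp (-(2 * Complex.I * (α : ℂ) * (t : ℂ))) •
          (NormedSpace.exp ((-(Complex.I * (t : ℂ))) • G.lapMatrix ℂ)).mulVec
            ((Pi.single a 1 : Fin n → ℂ) - Pi.single b 1) := by
  intro t
  set v : Fin n → ℂ := Pi.single a 1 - Pi.single b 1
  set μ : ℂ := ((G.degree a + if G.Adj a b then 1 else 0 : ℕ) : ℂ)
  have hL : G.lapMatrix ℂ *ᵥ v = μ • v :=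
    SimpleGraph.AreTwins.lapMatrix_mulVec_single_sub_single htwin hab
  have hM : vecMulVec v v *ᵥ v = (2 : ℂ) • v := by
    rw [vecMulVec_self_mulVec_self, dotProduct_single_sub_single_self hab]
  have hperturbed : (-(I * t) • (G.lapMatrix ℂ + (α : ℂ) • vecMulVec v v)) *ᵥ v =
      (-(I * t) * (μ + α * 2)) • v := by
    rw [smul_mulVec, add_mulVec, smul_mulVec, hL, hM, smul_smul, ← add_smul, smul_smul]
  have hfree : (-(I * t) • G.lapMatrix ℂ) *ᵥ v = (-(I * t) * μ) • v := by
    rw [smul_mulVec, hL, smul_smul]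
  rw [exp_mulVec_of_mulVec_eq_smul hperturbed, exp_mulVec_of_mulVec_eq_smul hfree,
    ← Complex.exp_eq_exp_ℂ, smul_smul, ← Complex.exp_add]
  congr 2
  ring
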